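/- arXiv:2306.00318 — 2 statements merged into one kernel-verified Lean document; each statement's English description precedes it below -/
import Mathlib

section
/- Let H be a real inner product space, let c_{n+1}, c_n ∈ H, r_{n+1}, r_n ∈ ℝ, and let μ ∈ H. Suppose (SAV relation) r_{n+1} - r_n = ⟨g, c_{n+1} - c_n⟩/(2√E) for some g ∈ H and E > 0, and suppose the scheme identity ⟨(r_{n+1}/√E) g, c_{n+1} - c_n⟩ + ε²⟨∇c_{n+1}, ∇(c_{n+1} - c_n)⟩ = -D holds, where ⟨∇·,∇·⟩ denotes a positive semidefinite symmetric bilinear form b on H, ε > 0, and D ≥ 0. Then (ε²/2) b(c_{n+1}, c_{n+1}) + r_{n+1}² ≤ (ε²/2) b(c_n, c_n) + r_n². -/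
open scoped InnerProductSpace

theorem sav_bdf1_energy_stability {H : Type*} [NormedAddCommGroup H] [InnerProductSpace ℝ H]
    (b : H →ₗ[ℝ] H →ₗ[ℝ] ℝ)
    (hsymm : ∀ x y, b x y = b y x) (hpsd : ∀ x, 0 ≤ b x x)
    (ε E D : ℝ) (hε : 0 < ε) (hE : 0 < E) (hD : 0 ≤ D)
    (g : H) (c1 c0 : H) (r1 r0 : ℝ)
    (hr : r1 - r0 = ⟪g, c1 - c0⟫_ℝ / (2 * Real.sqrt E))
    (hscheme : ⟪(r1 / Real.sqrt E) • g, c1 - c0⟫_ℝ + ε^2 * b c1 (c1 - c0) = -D) :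
    (ε^2 / 2) * b c1 c1 + r1^2 ≤ (ε^2 / 2) * b c0 c0 + r0^2 := by
  have hs : Real.sqrt E > 0 := Real.sqrt_pos.mpr hE
  have hinner : ⟪g, c1 - c0⟫_ℝ = 2 * Real.sqrt E * (r1 - r0) := by
    field_simp at hr; linarith
  have h1 : ⟪(r1 / Real.sqrt E) • g, c1 - c0⟫_ℝ = 2 * r1 * (r1 - r0) := by
    rw [real_inner_smul_left, hinner]; field_simp
  have hb1 : b c1 (c1 - c0) = b c1 c1 - b c1 c0 := by simp [map_sub]
  have hpsd' : 0 ≤ b c1 c1 - b c1 c0 - b c0 c1 + b c0 c0 := by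
    have := hpsd (c1 - c0)
    simp [map_sub, LinearMap.sub_apply] at this
    linarith
  have hsym := hsymm c1 c0
  rw [h1, hb1] at hscheme
  nlinarith [sq_nonneg (r1 - r0), mul_nonneg (sq_nonneg ε) hpsd']
end

section
/- Abstract SAV-BDF2 energy stability: let H be a real vector space with two symmetric positive semidefinite bilinear forms b₁ and b₂, let ε > 0, E > 0, g ∈ H, and let c_{n+1}, c_n, c_{n-1} ∈ H, r_{n+1}, r_n, r_{n-1} ∈ ℝ satisfy (i) 3r_{n+1} - 4r_n + r_{n-1} = (1/(2√E)) ℓ(3c_{n+1} - 4c_n + c_{n-1}) for a linear functional ℓ on H, and (ii) (r_{n+1}/√E) ℓ(3c_{n+1} - 4c_n + c_{n-1}) + ε² b₁(c_{n+1}, 3c_{n+1} - 4c_n + c_{n-1}) + b₂(c_{n+1}, 3c_{n+1} - 4c_n + c_{n-1}) = -D with D ≥ 0. Define Ẽ(u,v,s,t) = (ε²/2)(b₁(u,u) + b₁(2u - v, 2u - v)) + s² + (2s - t)² + (1/2)(b₂(u,u) + b₂(2u - v, 2u - v)). Then Ẽ(c_{n+1}, c_n, r_{n+1}, r_n) ≤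 Ẽ(c_n, c_{n-1}, r_n, r_{n-1}). -/
lemma bdf2_bilin {H : Type*} [AddCommGroup H] [Module ℝ H]
    (b : H →ₗ[ℝ] H →ₗ[ℝ] ℝ) (hs : ∀ x y, b x y = b y x) (x y z : H) :
    2 * b x ((3:ℝ) • x - (4:ℝ) • y + z)
      = b x x + b ((2:ℝ) • x - y) ((2:ℝ) • x - y)
        - b y y - b ((2:ℝ) • y - z) ((2:ℝ) • y - z)
        + b (x - (2:ℝ) • y + z) (x - (2:ℝ) • y + z) := by
  simp only [map_sub, map_add, map_smul, LinearMap.sub_apply, LinearMap.add_apply,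
    LinearMap.smul_apply, smul_eq_mul]
  rw [hs y x, hs z x, hs z y]
  ring

theorem sav_bdf2_energy_stability {H : Type*} [AddCommGroup H] [Module ℝ H]
    (b₁ b₂ : H →ₗ[ℝ] H →ₗ[ℝ] ℝ)
    (hsymm₁ : ∀ x y, b₁ x y = b₁ y x) (hpsd₁ : ∀ x, 0 ≤ b₁ x x)
    (hsymm₂ : ∀ x y, b₂ x y = b₂ y x) (hpsd₂ : ∀ x, 0 ≤ b₂ x x)
    (ε E D : ℝ) (hε : 0 < ε) (hE : 0 < E) (hD : 0 ≤ D)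
    (ℓ : H →ₗ[ℝ] ℝ)
    (c1 c0 cm1 : H) (r1 r0 rm1 : ℝ)
    (hr : 3 * r1 - 4 * r0 + rm1
        = (1 / (2 * Real.sqrt E)) * ℓ ((3:ℝ) • c1 - (4:ℝ) • c0 + cm1))
    (hscheme : (r1 / Real.sqrt E) * ℓ ((3:ℝ) • c1 - (4:ℝ) • c0 + cm1)
        + ε^2 * b₁ c1 ((3:ℝ) • c1 - (4:ℝ) • c0 + cm1)
        + b₂ c1 ((3:ℝ) • c1 - (4:ℝ) • c0 + cm1) = -D) :
    (fun (u v : H) (s t : ℝ) =>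
        (ε^2 / 2) * (b₁ u u + b₁ ((2:ℝ) • u - v) ((2:ℝ) • u - v))
          + s^2 + (2 * s - t)^2
          + (1 / 2) * (b₂ u u + b₂ ((2:ℝ) • u - v) ((2:ℝ) • u - v)))
      c1 c0 r1 r0
    ≤ (fun (u v : H) (s t : ℝ) =>
        (ε^2 / 2) * (b₁ u u + b₁ ((2:ℝ) • u - v) ((2:ℝ) • u - v))
          + s^2 + (2 * s - t)^2
          + (1 / 2) * (b₂ u u + b₂ ((2:ℝ) • u - v) ((2:ℝ) • u - v)))
      c0 cm1 r0 rm1 := by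
  simp only
  have hsE : (0:ℝ) < Real.sqrt E := Real.sqrt_pos.mpr hE
  -- from hr: ℓ(δc) = 2√E (3r1 - 4r0 + rm1)
  have hℓ : ℓ ((3:ℝ) • c1 - (4:ℝ) • c0 + cm1)
      = 2 * Real.sqrt E * (3 * r1 - 4 * r0 + rm1) := by
    have : ℓ ((3:ℝ) • c1 - (4:ℝ) • c0 + cm1) = 3 * ℓ c1 - 4 * ℓ c0 + ℓ cm1 := by
      simp [map_sub, map_add, map_smul]
    rw [this]
    field_simp at hr
    linarith
  have hr1 : (r1 / Real.sqrt E) * ℓ ((3:ℝ) • c1 - (4:ℝ) • c0 + cm1)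
      = 2 * r1 * (3 * r1 - 4 * r0 + rm1) := by
    rw [hℓ]; field_simp
  have h1 := bdf2_bilin b₁ hsymm₁ c1 c0 cm1
  have h2 := bdf2_bilin b₂ hsymm₂ c1 c0 cm1
  have hp1 := hpsd₁ (c1 - (2:ℝ) • c0 + cm1)
  have hp2 := hpsd₂ (c1 - (2:ℝ) • c0 + cm1)
  have hε2 : (0:ℝ) < ε^2 := by positivity
  rw [hr1] at hscheme
  nlinarith [sq_nonneg (r1 - 2*r0 + rm1), mul_nonneg hε2.le hp1,
    mul_le_mul_of_nonneg_left h1.le hε2.le, mul_le_mul_of_nonneg_left h1.ge hε2.le]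
end
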